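/- arXiv:2509.05129 — 5 statements merged into one kernel-verified Lean document; each statement's English description precedes it below -/
import Mathlib

section
/- If v is a cut vertex separating s and t into different connected components of G \ {v}, then the resistance distance satisfies r(s,t) = r(s,v) + r(v,t). -/
/-!
If `L x = e_s - e_t` then `r(s,t) = x_s - x_t`: only `L L† L = L` and the symmetry of `L` are
needed. Freeze such a potential `x` at the value `x_v` outside the component `C` of `s` in
`G - v`. Since `(L y)_u` only sees `u` and its neighbours and every edge leaving `C` ends at `v`,
the frozen potential `y` satisfies `L y = e_s - e_v`, hence `L (x - y) = e_v - e_t`, and the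
three resistances are `x_s - x_t`, `x_s - x_v` and `x_v - x_t`.
-/

open Matrix

open scoped Classical in
/-- Moore-Penrose pseudoinverse of a real matrix (chosen via the Penrose conditions). -/
noncomputable def matPinv {m : Type*} [Fintype m] (A : Matrix m m ℝ) : Matrix m m ℝ :=
  if h : ∃ B, A * B * A = A ∧ B * A * B = B ∧ (A * B)ᵀ = A * B ∧ (B * A)ᵀ = B * A
  then h.choose else 0

/-- Resistance distance r(s,t) = (e_s - e_t)ᵀ L† (e_s - e_t). -/
noncomputable def rdist {n : ℕ} (G : SimpleGraph (Fin n)) [DecidableRel G.Adj]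
    (s t : Fin n) : ℝ :=
  (Pi.single s 1 - Pi.single t 1 : Fin n → ℝ) ⬝ᵥ
    (matPinv (G.lapMatrix ℝ) *ᵥ (Pi.single s 1 - Pi.single t 1))

theorem Pi.eq_of_sum_eq_of_forall_ne {V M : Type*} [Fintype V] [DecidableEq V]
    [AddCommGroup M] {f g : V → M} (v : V) (hsum : ∑ u, f u = ∑ u, g u)
    (h : ∀ u, u ≠ v → f u = g u) : f = g := by
  funext u
  obtain rfl | hu := eq_or_ne u v
  · rwa [← Finset.add_sum_erase _ _ (Finset.mem_univ u),
      ← Finset.add_sum_erase _ g (Finset.mem_univ u),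
      Finset.sum_congr rfl fun w hw => h w (Finset.ne_of_mem_erase hw), add_left_inj] at hsum
  · exact h u hu

theorem sum_single_sub_single {V R : Type*} [Fintype V] [DecidableEq V] [AddCommGroup R] [One R]
    (a b : V) : ∑ u, (Pi.single a 1 - Pi.single b 1 : V → R) u = 0 := by
  simp [Finset.sum_sub_distrib]

section Penrose

variable {m : Type*} [Fintype m]

theorem mulVec_mulVec_eq_self_of_penrose {R : Type*} [CommRing R] {A B : Matrix m m R}
    (hABA : A * B * A = A) (hAB : (A * B)ᵀ = A * B) {w : m → R}
    (hw : ∀ z, Aᵀ *ᵥ z = 0 → z ⬝ᵥ w = 0) : A *ᵥ (B *ᵥ w) = w := by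
  classical
  -- the columns of `P = 1 - A B` lie in `ker Aᵀ`, which is orthogonal to `w`
  set P := 1 - A * B
  have hP : Pᵀ = P := by simp only [P, transpose_sub, transpose_one, hAB]
  have hAP : Aᵀ * P = 0 := by
    rw [← hP, ← transpose_mul]
    simp [P, Matrix.sub_mul, hABA]
  have hPw : P *ᵥ w = 0 := by
    ext i
    have hcol : Aᵀ *ᵥ (P *ᵥ Pi.single i 1) = 0 := by rw [mulVec_mulVec, hAP, zero_mulVec]
    calc (P *ᵥ w) i = (Pi.single i 1 ᵥ* P) ⬝ᵥ w := by
          rw [← dotProduct_mulVec, single_one_dotProduct]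
      _ = (P *ᵥ Pi.single i 1) ⬝ᵥ w := by rw [← mulVec_transpose, hP]
      _ = 0 := hw _ hcol
  have hsub : w - (A * B) *ᵥ w = 0 := by simpa [P, sub_mulVec] using hPw
  rw [mulVec_mulVec]
  exact (sub_eq_zero.mp hsub).symm

variable [DecidableEq m] {A : Matrix m m ℝ}

theorem Matrix.IsHermitian.exists_penrose (hA : A.IsHermitian) :
    ∃ B, A * B * A = A ∧ B * A * B = B ∧ (A * B)ᵀ = A * B ∧ (B * A)ᵀ = B * A := by
  have hA' : IsSelfAdjoint A := hA
  have hmul (f g : ℝ → ℝ) : cfc f A * cfc g A = cfc (fun x => f x * g x) A :=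
    (cfc_mul f g A ((spectrum ℝ A).toFinite.continuousOn _)
      ((spectrum ℝ A).toFinite.continuousOn _)).symm
  have hsymm (f : ℝ → ℝ) : (cfc f A)ᵀ = cfc f A := IsSymm.eq (cfc_predicate f A)
  have hinv (x : ℝ) : x⁻¹ * x * x⁻¹ = x⁻¹ := by simpa using mul_inv_mul_cancel x⁻¹
  -- since `0⁻¹ = 0`, `x ↦ x⁻¹` is the pseudoinverse of every real number
  refine ⟨cfc (fun x : ℝ => x⁻¹) A, ?_⟩
  generalize hB : cfc (fun x : ℝ => x⁻¹) A = B
  rw [← cfc_id' ℝ A, ← hB]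
  simp only [hmul, hsymm, mul_inv_mul_cancel, hinv, and_self]

theorem Matrix.IsHermitian.penrose_matPinv (hA : A.IsHermitian) :
    A * matPinv A * A = A ∧ matPinv A * A * matPinv A = matPinv A ∧
      (A * matPinv A)ᵀ = A * matPinv A ∧ (matPinv A * A)ᵀ = matPinv A * A := by
  rw [matPinv, dif_pos hA.exists_penrose]
  exact hA.exists_penrose.choose_spec

end Penrose

namespace SimpleGraph

variable {V : Type*} [Fintype V] [DecidableEq V] (G : SimpleGraph V) [DecidableRel G.Adj]

theorem sum_lapMatrix_mulVec {R : Type*} [CommRing R] (x : V → R) :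
    ∑ u, (G.lapMatrix R *ᵥ x) u = 0 := by
  rw [← one_dotProduct, dotProduct_mulVec, ← mulVec_transpose, (G.isSymm_lapMatrix R).eq]
  exact (congrArg (· ⬝ᵥ x) G.lapMatrix_mulVec_const_eq_zero).trans (zero_dotProduct x)

theorem lapMatrix_mulVec_apply_congr {R : Type*} [CommRing R] {x y : V → R} {u : V}
    (hu : x u = y u) (hadj : ∀ w, G.Adj u w → x w = y w) :
    (G.lapMatrix R *ᵥ x) u = (G.lapMatrix R *ᵥ y) u := by
  simp only [lapMatrix_mulVec_apply, hu,
    Finset.sum_congr rfl fun w hw => hadj w ((G.mem_neighborFinset u w).mp hw)]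

theorem exists_lapMatrix_mulVec_eq (hG : G.Connected) {w : V → ℝ} (hw : ∑ u, w u = 0) :
    ∃ x, G.lapMatrix ℝ *ᵥ x = w := by
  obtain ⟨hLPL, -, hLP, -⟩ := (G.isHermitian_lapMatrix ℝ).penrose_matPinv
  refine ⟨_, mulVec_mulVec_eq_self_of_penrose hLPL hLP fun z hz => ?_⟩
  rw [(G.isSymm_lapMatrix ℝ).eq, lapMatrix_mulVec_eq_zero_iff_forall_reachable] at hz
  obtain ⟨u₀⟩ := hG.nonempty
  calc z ⬝ᵥ w = ∑ u, z u₀ * w u :=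
        Finset.sum_congr rfl fun u _ => by rw [hz u u₀ (hG.preconnected u u₀)]
    _ = 0 := by rw [← Finset.mul_sum, hw, mul_zero]

variable {G} {R : Type*} [CommRing R] {C : Set V} [DecidablePred (· ∈ C)] {v : V}

theorem lapMatrix_mulVec_piecewise_apply (hvC : v ∉ C)
    (hC : ∀ u ∈ C, ∀ w, G.Adj u w → w ≠ v → w ∈ C) (x : V → R) {u : V} (hu : u ≠ v) :
    (G.lapMatrix R *ᵥ C.piecewise x fun _ => x v) u = C.indicator (G.lapMatrix R *ᵥ x) u := by
  have hpv : C.piecewise x (fun _ => x v) v = x v := Set.piecewise_eq_of_notMem _ _ _ hvC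
  by_cases huC : u ∈ C
  · rw [Set.indicator_of_mem huC]
    refine G.lapMatrix_mulVec_apply_congr (Set.piecewise_eq_of_mem _ _ _ huC) fun w huw => ?_
    obtain rfl | hw := eq_or_ne w v
    · exact hpv
    · exact Set.piecewise_eq_of_mem _ _ _ (hC u huC w huw hw)
  · rw [Set.indicator_of_notMem huC, ← Pi.zero_apply (M := fun _ => R) u,
      ← smul_zero (x v), ← G.lapMatrix_mulVec_const_eq_zero, ← mulVec_smul]
    refine G.lapMatrix_mulVec_apply_congr (by simp [huC]) fun w huw => ?_
    obtain rfl | hw := eq_or_ne w v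
    · simpa using hpv
    · have hwC : w ∉ C := fun hwC => huC (hC w hwC u huw.symm hu)
      simp [hwC]

theorem lapMatrix_mulVec_piecewise {s t : V} (hvC : v ∉ C)
    (hC : ∀ u ∈ C, ∀ w, G.Adj u w → w ≠ v → w ∈ C) (hsC : s ∈ C) (htC : t ∉ C) {x : V → R}
    (hx : G.lapMatrix R *ᵥ x = Pi.single s 1 - Pi.single t 1) :
    (G.lapMatrix R *ᵥ C.piecewise x fun _ => x v) = Pi.single s 1 - Pi.single v 1 := by
  refine Pi.eq_of_sum_eq_of_forall_ne v ?_ fun u hu => ?_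
  · rw [sum_lapMatrix_mulVec, sum_single_sub_single]
  rw [lapMatrix_mulVec_piecewise_apply hvC hC x hu, hx]
  by_cases huC : u ∈ C
  · have hut : u ≠ t := ne_of_mem_of_not_mem huC htC
    simp [huC, Pi.single_apply, hut, hu]
  · have hus : u ≠ s := fun h => huC (h ▸ hsC)
    simp [huC, hus, hu]

end SimpleGraph

open SimpleGraph

theorem rdist_eq_of_lapMatrix_mulVec_eq {n : ℕ} {G : SimpleGraph (Fin n)} [DecidableRel G.Adj]
    {a b : Fin n} {g : Fin n → ℝ}
    (hg : G.lapMatrix ℝ *ᵥ g = Pi.single a 1 - Pi.single b 1) : rdist G a b = g a - g b := by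
  obtain ⟨hLPL, -⟩ := (G.isHermitian_lapMatrix ℝ).penrose_matPinv
  calc rdist G a b
      = ((G.lapMatrix ℝ)ᵀ *ᵥ g) ⬝ᵥ (matPinv (G.lapMatrix ℝ) *ᵥ (G.lapMatrix ℝ *ᵥ g)) := by
        rw [rdist, (G.isSymm_lapMatrix ℝ).eq, hg]
    _ = g ⬝ᵥ (G.lapMatrix ℝ *ᵥ g) := by
        rw [mulVec_transpose, ← dotProduct_mulVec, mulVec_mulVec, mulVec_mulVec, hLPL]
    _ = g a - g b := by simp [hg, dotProduct_sub]

theorem resistance_cut_vertex {n : ℕ} (G : SimpleGraph (Fin n))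
    [DecidableRel G.Adj] (hG : G.Connected) (s t v : Fin n)
    (hs : s ≠ v) (ht : t ≠ v)
    (hcut : ¬ (G.induce {u : Fin n | u ≠ v}).Reachable ⟨s, hs⟩ ⟨t, ht⟩) :
    rdist G s t = rdist G s v + rdist G v t := by
  classical
  obtain ⟨x, hx⟩ := G.exists_lapMatrix_mulVec_eq hG (sum_single_sub_single s t)
  set C : Set (Fin n) :=
    {u | ∃ hu : u ≠ v, (G.induce {u | u ≠ v}).Reachable ⟨s, hs⟩ ⟨u, hu⟩}
  have hsC : s ∈ C := ⟨hs, .refl _⟩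
  have hvC : v ∉ C := fun ⟨hv, _⟩ => hv rfl
  have htC : t ∉ C := fun ⟨_, hr⟩ => hcut hr
  have hC : ∀ u ∈ C, ∀ w, G.Adj u w → w ≠ v → w ∈ C := fun u ⟨_, hr⟩ w huw hw =>
    ⟨hw, hr.trans (Adj.reachable (by simpa using huw))⟩
  set y := C.piecewise x fun _ => x v
  have hy : G.lapMatrix ℝ *ᵥ y = Pi.single s 1 - Pi.single v 1 :=
    lapMatrix_mulVec_piecewise hvC hC hsC htC hx
  have hxy : G.lapMatrix ℝ *ᵥ (x - y) = Pi.single v 1 - Pi.single t 1 := by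
    rw [mulVec_sub, hx, hy, sub_sub_sub_cancel_left]
  rw [rdist_eq_of_lapMatrix_mulVec_eq hx, rdist_eq_of_lapMatrix_mulVec_eq hy,
    rdist_eq_of_lapMatrix_mulVec_eq hxy]
  simp [y, hsC, hvC, htC]
end

section
/- Let v be a cut vertex whose removal separates s from t. Then the (s,t) entry of L_v^{-1} is zero, where L_v is the Laplacian submatrix with row and column v removed. -/
/-!
Order the vertices other than `v` by whether they are reachable from `s` in `G - v`. No edge,
hence no off-diagonal Laplacian entry, joins the two classes, so `L_v` is block triangular for
this order; inverses of block triangular matrices are block triangular with the same blocks.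
-/

open Matrix

theorem SimpleGraph.lapMatrix_apply_eq_zero_of_not_reachable_induce {V R : Type*} [Fintype V]
    [DecidableEq V] [AddGroupWithOne R] (G : SimpleGraph V) [DecidableRel G.Adj] {S : Set V}
    {i j : S} (hij : ¬ (G.induce S).Reachable i j) : G.lapMatrix R i j = 0 := by
  have hne : (i : V) ≠ j := fun h => hij (Subtype.ext h ▸ .refl i)
  have hadj : ¬ G.Adj i j := fun h => hij (SimpleGraph.Adj.reachable (G := G.induce S) h)
  simp [lapMatrix, degMatrix, diagonal_apply_ne _ hne, hadj]

theorem Matrix.inv_apply_eq_zero_of_not_reachable {ι R : Type*} [Fintype ι] [DecidableEq ι]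
    [CommRing R] (H : SimpleGraph ι) {M : Matrix ι ι R}
    (hM : ∀ i j, ¬ H.Reachable i j → M i j = 0) {i j : ι} (hij : ¬ H.Reachable i j) :
    M⁻¹ i j = 0 := by
  classical
  by_cases hdet : IsUnit M.det
  · let := M.invertibleOfIsUnitDet hdet
    let b : ι → ℕ := fun k => if H.Reachable i k then 1 else 0
    have hM_block : M.BlockTriangular b := by
      intro k l hlk
      have hk : H.Reachable i k := by by_contra h; simp [b, h] at hlk
      have hl : ¬ H.Reachable i l := by intro h; simp [b, hk, h] at hlk
      exact hM k l fun hkl => hl (hk.trans hkl)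
    exact blockTriangular_inv_of_blockTriangular hM_block (by simp [b, hij])
  · simp [nonsing_inv_apply_not_isUnit _ hdet]

theorem grounded_inverse_entry_zero_of_cut_vertex_general {n : ℕ} (G : SimpleGraph (Fin n))
    [DecidableRel G.Adj] (s t v : Fin n)
    (hs : s ≠ v) (ht : t ≠ v)
    (hcut : ¬ (G.induce {u : Fin n | u ≠ v}).Reachable ⟨s, hs⟩ ⟨t, ht⟩) :
    let Lv : Matrix {i : Fin n // i ≠ v} {i : Fin n // i ≠ v} ℝ :=
      (G.lapMatrix ℝ).submatrix Subtype.val Subtype.val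
    Lv⁻¹ ⟨s, hs⟩ ⟨t, ht⟩ = 0 :=
  inv_apply_eq_zero_of_not_reachable _
    (fun _ _ => G.lapMatrix_apply_eq_zero_of_not_reachable_induce) hcut

theorem grounded_inverse_entry_zero_of_cut_vertex {n : ℕ} (G : SimpleGraph (Fin n))
    [DecidableRel G.Adj] (hG : G.Connected) (s t v : Fin n)
    (hs : s ≠ v) (ht : t ≠ v)
    (hcut : ¬ (G.induce {u : Fin n | u ≠ v}).Reachable ⟨s, hs⟩ ⟨t, ht⟩) :
    let Lv : Matrix {i : Fin n // i ≠ v} {i : Fin n // i ≠ v} ℝ :=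
      (G.lapMatrix ℝ).submatrix Subtype.val Subtype.val
    Lv⁻¹ ⟨s, hs⟩ ⟨t, ht⟩ = 0 :=
  grounded_inverse_entry_zero_of_cut_vertex_general G s t v hs ht hcut
end

section
/- Let V_cut be a vertex cut separating V_1 ∋ s and V_2 ∋ t, and U = V \ V_cut. Then r(s,t) = e_s^T L_{V_1V_1}^{-1} e_s + e_t^T L_{V_2V_2}^{-1} e_t + (p_s - p_t)^T (L/V_cut)^† (p_s - p_t), where p_u is the u-th row of -L_{UU}^{-1} L_{U V_cut} and L/V_cut = L_{V_cut V_cut} - L_{V_cut U} L_{UU}^{-1} L_{U V_cut} is the Schur complement of L onto V_cut. -/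
/-
Put x = e_s - e_t and y = L† x. Since G is connected, ker L consists of the constant vectors,
which are orthogonal to x, so L y = x and r(s,t) = x ⬝ y. As x vanishes on V_cut, the block
system L y = x can be solved for the U-part and leaves S y_C = p_s - p_t for the Schur complement
S = L/V_cut; this yields x ⬝ y = x_U ⬝ L_UU⁻¹ x_U + (p_s - p_t) ⬝ S† (p_s - p_t). Finally, no edge
joins V_1 to U \ V_1, so L_UU⁻¹ e_s is L_{V_1V_1}⁻¹ e_s extended by zero, and likewise for t;
this splits x_U ⬝ L_UU⁻¹ x_U into the two remaining terms.
-/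

open Matrix

open Function

section MoorePenrose

variable {m : Type*} [Fintype m] {A : Matrix m m ℝ}

theorem Matrix.IsSymm.dotProduct_mulVec_comm (hA : A.IsSymm) (u v : m → ℝ) :
    u ⬝ᵥ (A *ᵥ v) = (A *ᵥ u) ⬝ᵥ v := by
  rw [dotProduct_mulVec, ← vecMul_transpose, hA.eq]

theorem exists_penrose_of_isSymm (hA : A.IsSymm) :
    ∃ B, A * B * A = A ∧ B * A * B = B ∧ (A * B)ᵀ = A * B ∧ (B * A)ᵀ = B * A := by
  classical
  have hH : A.IsHermitian := isHermitian_iff_isSymm.mpr hA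
  set φ := Unitary.conjStarAlgAut ℝ (Matrix m m ℝ) hH.eigenvectorUnitary
  set d : m → ℝ := RCLike.ofReal ∘ hH.eigenvalues
  have hA' : A = φ (diagonal d) := hH.spectral_theorem
  -- invert the nonzero eigenvalues (`0⁻¹ = 0` keeps the zero ones)
  refine ⟨φ (diagonal d⁻¹), ?_⟩
  have hinv : ∀ a : ℝ, a⁻¹ * a * a⁻¹ = a⁻¹ := fun a => by simpa using mul_inv_mul_cancel a⁻¹
  simp only [← conjTranspose_eq_transpose_of_trivial, hA', ← map_mul, ← star_eq_conjTranspose,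
    ← map_star]
  simp [diagonal_mul_diagonal, mul_inv_mul_cancel, hinv, star_eq_conjTranspose]

theorem mul_matPinv_mul_self (hA : A.IsSymm) : A * matPinv A * A = A := by
  have h := exists_penrose_of_isSymm hA
  rw [matPinv, dif_pos h]
  exact h.choose_spec.1

theorem transpose_mul_matPinv (hA : A.IsSymm) : (A * matPinv A)ᵀ = A * matPinv A := by
  have h := exists_penrose_of_isSymm hA
  rw [matPinv, dif_pos h]
  exact h.choose_spec.2.2.1

theorem mulVec_matPinv_mulVec_of_orthogonal_ker (hA : A.IsSymm) {x : m → ℝ}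
    (hx : ∀ v, A *ᵥ v = 0 → v ⬝ᵥ x = 0) : A *ᵥ (matPinv A *ᵥ x) = x := by
  set v := x - A *ᵥ (matPinv A *ᵥ x)
  have hvA : v ᵥ* A = 0 := by
    rw [sub_vecMul, mulVec_mulVec, ← vecMul_transpose, transpose_mul_matPinv hA, vecMul_vecMul,
      mul_matPinv_mul_self hA, sub_self]
  have hAv : A *ᵥ v = 0 := by rw [← vecMul_transpose, hA.eq, hvA]
  have hvv : v ⬝ᵥ v = 0 := by
    rw [dotProduct_sub, dotProduct_mulVec, hvA, zero_dotProduct, hx v hAv, sub_zero]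
  exact (sub_eq_zero.mp (dotProduct_self_eq_zero.mp hvv)).symm

theorem dotProduct_matPinv_mulVec_of_mulVec_eq (hA : A.IsSymm) {x y : m → ℝ}
    (hy : A *ᵥ y = x) : x ⬝ᵥ (matPinv A *ᵥ x) = x ⬝ᵥ y := by
  subst hy
  rw [← hA.dotProduct_mulVec_comm, mulVec_mulVec, mulVec_mulVec,
    mul_matPinv_mul_self hA, dotProduct_comm]

end MoorePenrose

section Extend

variable {R κ ι : Type*} {f : κ → ι}

theorem Function.Injective.extend_single [DecidableEq κ] [DecidableEq ι] [Zero R]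
    (hf : Injective f) (a : κ) (c : R) : extend f (Pi.single a c) 0 = Pi.single (f a) c := by
  funext i
  by_cases hi : ∃ k, f k = i
  · obtain ⟨k, rfl⟩ := hi
    simp [hf.extend_apply, Pi.single_apply, hf.eq_iff]
  · rw [extend_apply' _ _ _ hi, Pi.zero_apply, Pi.single_apply, if_neg]
    rintro rfl
    exact hi ⟨a, rfl⟩

variable [Fintype κ] [Fintype ι]

theorem Function.Injective.extend_dotProduct [NonUnitalNonAssocSemiring R] (hf : Injective f)
    (x : κ → R) (v : ι → R) : extend f x 0 ⬝ᵥ v = x ⬝ᵥ (v ∘ f) :=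
  (Fintype.sum_of_injective f hf _ _
    (fun i hi => by rw [extend_apply' _ _ _ (by simpa using hi), Pi.zero_apply, zero_mul])
    (fun k => by rw [hf.extend_apply, comp_apply])).symm

theorem Function.Injective.mulVec_extend [CommSemiring R] {l : Type*}
    (hf : Injective f) (M : Matrix l ι R) (x : κ → R) :
    M *ᵥ extend f x 0 = M.submatrix id f *ᵥ x :=
  funext fun i => by
    change (fun j => M i j) ⬝ᵥ extend f x 0 = (fun k => M i (f k)) ⬝ᵥ x
    rw [dotProduct_comm, hf.extend_dotProduct, dotProduct_comm]
    rfl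

theorem Matrix.inv_mulVec_extend [CommRing R] [DecidableEq κ] [DecidableEq ι] {M : Matrix ι ι R}
    (hf : Injective f) (hM : IsUnit M.det) (hMf : IsUnit (M.submatrix f f).det)
    (hzero : ∀ i ∉ Set.range f, ∀ k, M i (f k) = 0) (b : κ → R) :
    M⁻¹ *ᵥ extend f b 0 = extend f ((M.submatrix f f)⁻¹ *ᵥ b) 0 := by
  have hsolve : M *ᵥ extend f ((M.submatrix f f)⁻¹ *ᵥ b) 0 = extend f b 0 := by
    funext i
    rw [hf.mulVec_extend]
    by_cases hi : i ∈ Set.range f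
    · obtain ⟨k, rfl⟩ := hi
      rw [hf.extend_apply]
      change (M.submatrix f f *ᵥ ((M.submatrix f f)⁻¹ *ᵥ b)) k = b k
      rw [mulVec_mulVec, mul_nonsing_inv _ hMf, one_mulVec]
    · rw [extend_apply' _ _ _ hi]
      exact Finset.sum_eq_zero fun k _ => by
        change M i (f k) * _ = 0
        rw [hzero i hi k, zero_mul]
  rw [← hsolve, mulVec_mulVec, nonsing_inv_mul _ hM, one_mulVec]

theorem Matrix.single_sub_single_dotProduct_inv_mulVec [CommRing R] [DecidableEq ι]
    {κ' : Type*} [Fintype κ'] [DecidableEq κ] [DecidableEq κ'] {M : Matrix ι ι R} {f' : κ' → ι}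
    (hf : Injective f) (hf' : Injective f') (hM : IsUnit M.det)
    (hMf : IsUnit (M.submatrix f f).det) (hMf' : IsUnit (M.submatrix f' f').det)
    (hzero : ∀ i ∉ Set.range f, ∀ k, M i (f k) = 0)
    (hzero' : ∀ i ∉ Set.range f', ∀ k, M i (f' k) = 0)
    (hdisj : Disjoint (Set.range f) (Set.range f')) (a : κ) (b : κ') :
    (Pi.single (f a) 1 - Pi.single (f' b) 1) ⬝ᵥ
        (M⁻¹ *ᵥ (Pi.single (f a) 1 - Pi.single (f' b) 1)) =
      Pi.single a 1 ⬝ᵥ ((M.submatrix f f)⁻¹ *ᵥ Pi.single a 1) +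
        Pi.single b 1 ⬝ᵥ ((M.submatrix f' f')⁻¹ *ᵥ Pi.single b 1) := by
  have ha : f a ∉ Set.range f' := Set.disjoint_left.mp hdisj ⟨a, rfl⟩
  have hb : f' b ∉ Set.range f := Set.disjoint_right.mp hdisj ⟨b, rfl⟩
  rw [mulVec_sub, ← hf.extend_single, ← hf'.extend_single, inv_mulVec_extend hf hM hMf hzero,
    inv_mulVec_extend hf' hM hMf' hzero', hf.extend_single, hf'.extend_single]
  simp only [sub_dotProduct, dotProduct_sub, single_dotProduct, one_mul, hf.extend_apply,
    hf'.extend_apply, extend_apply' _ _ _ ha, extend_apply' _ _ _ hb, Pi.zero_apply]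
  ring

end Extend

theorem dotProduct_eq_add_of_block_mulVec_eq {m n : Type*} [Fintype m] [Fintype n]
    [DecidableEq m] {A : Matrix m m ℝ} {B : Matrix m n ℝ}
    {D : Matrix n n ℝ} (hA : A.IsSymm) (hAdet : IsUnit A.det) (hD : D.IsSymm)
    {x yU : m → ℝ} {yC : n → ℝ}
    (h₁ : A *ᵥ yU + B *ᵥ yC = x) (h₂ : Bᵀ *ᵥ yU + D *ᵥ yC = 0) :
    x ⬝ᵥ yU = x ⬝ᵥ (A⁻¹ *ᵥ x) +
      (x ᵥ* (A⁻¹ * B)) ⬝ᵥ (matPinv (D - Bᵀ * A⁻¹ * B) *ᵥ (x ᵥ* (A⁻¹ * B))) := by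
  have hSsymm : (D - Bᵀ * A⁻¹ * B).IsSymm := by
    rw [IsSymm, transpose_sub, transpose_mul, transpose_mul, transpose_transpose, hD.eq,
      hA.inv.eq, Matrix.mul_assoc]
  have hq : x ᵥ* (A⁻¹ * B) = Bᵀ *ᵥ (A⁻¹ *ᵥ x) := by
    rw [← mulVec_transpose, transpose_mul, hA.inv.eq, mulVec_mulVec]
  have hyU : yU = A⁻¹ *ᵥ (x - B *ᵥ yC) := by
    rw [← eq_sub_of_add_eq h₁, mulVec_mulVec, nonsing_inv_mul _ hAdet, one_mulVec]
  have hS : (D - Bᵀ * A⁻¹ * B) *ᵥ yC = -(x ᵥ* (A⁻¹ * B)) := by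
    rw [sub_mulVec, eq_neg_of_add_eq_zero_right h₂, hyU, hq]
    simp only [mulVec_sub, mulVec_mulVec, Matrix.mul_assoc]
    abel
  set q := x ᵥ* (A⁻¹ * B)
  -- `S yC = -q` is all that is needed here: `q ⬝ S† q = yC ⬝ S S† S yC` and `S S† S = S`.
  have hqS : q ⬝ᵥ (matPinv (D - Bᵀ * A⁻¹ * B) *ᵥ q) = -(q ⬝ᵥ yC) := by
    simpa only [mulVec_neg, dotProduct_neg, neg_dotProduct, neg_neg]
      using dotProduct_matPinv_mulVec_of_mulVec_eq hSsymm hS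
  rw [hqS, hyU, mulVec_sub, dotProduct_sub, mulVec_mulVec, dotProduct_mulVec x (A⁻¹ * B),
    sub_eq_add_neg]

theorem Matrix.mulVec_comp_eq_add_compl {R ι κ l : Type*} [NonUnitalNonAssocSemiring R]
    [Fintype ι] [DecidableEq ι]
    (C : Finset ι) (M : Matrix l ι R) (g : κ → l) (y : ι → R) :
    (M *ᵥ y) ∘ g = M.submatrix g (Subtype.val : {i // i ∈ Cᶜ} → ι) *ᵥ (y ∘ Subtype.val) +
      M.submatrix g (Subtype.val : {i // i ∈ C} → ι) *ᵥ (y ∘ Subtype.val) := by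
  funext k
  change ∑ i, M (g k) i * y i =
    ∑ u : {i // i ∈ Cᶜ}, M (g k) u * y u + ∑ c : {i // i ∈ C}, M (g k) c * y c
  rw [Finset.sum_coe_sort Cᶜ (fun i => M (g k) i * y i),
    Finset.sum_coe_sort C (fun i => M (g k) i * y i), Finset.sum_compl_add_sum]

theorem Matrix.extend_dotProduct_eq_add_schur {ι : Type*} [Fintype ι] [DecidableEq ι]
    {M : Matrix ι ι ℝ} (hM : M.IsSymm) {C : Finset ι}
    (hU : IsUnit (M.submatrix (Subtype.val : {i // i ∈ Cᶜ} → ι) Subtype.val).det)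
    {x : {i // i ∈ Cᶜ} → ℝ} {y : ι → ℝ} (hy : M *ᵥ y = extend Subtype.val x 0) :
    let A := M.submatrix (Subtype.val : {i // i ∈ Cᶜ} → ι) Subtype.val
    let B := M.submatrix (Subtype.val : {i // i ∈ Cᶜ} → ι) (Subtype.val : {i // i ∈ C} → ι)
    let D := M.submatrix (Subtype.val : {i // i ∈ C} → ι) Subtype.val
    let Bt := M.submatrix (Subtype.val : {i // i ∈ C} → ι) (Subtype.val : {i // i ∈ Cᶜ} → ι)
    extend Subtype.val x 0 ⬝ᵥ y =
      x ⬝ᵥ (A⁻¹ *ᵥ x) + (x ᵥ* (A⁻¹ * B)) ⬝ᵥ (matPinv (D - Bt * A⁻¹ * B) *ᵥ (x ᵥ* (A⁻¹ * B))) := by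
  intro A B D Bt
  have hBt : Bᵀ = Bt := by rw [transpose_submatrix, hM.eq]
  have h₁ : A *ᵥ (y ∘ Subtype.val) + B *ᵥ (y ∘ Subtype.val) = x := by
    rw [← M.mulVec_comp_eq_add_compl C, hy, extend_comp Subtype.val_injective]
  have h₂ : Bᵀ *ᵥ (y ∘ Subtype.val) + D *ᵥ (y ∘ Subtype.val) = 0 := by
    rw [hBt, ← M.mulVec_comp_eq_add_compl C, hy]
    funext c
    exact extend_apply' _ _ _ fun ⟨u, hu⟩ => Finset.mem_compl.mp u.2 (hu ▸ c.2)
  rw [← hBt, Subtype.val_injective.extend_dotProduct]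
  exact dotProduct_eq_add_of_block_mulVec_eq (hM.submatrix _) hU (hM.submatrix _) h₁ h₂

namespace SimpleGraph

variable {V : Type*} [Fintype V] [DecidableEq V] (G : SimpleGraph V) [DecidableRel G.Adj]

theorem lapMatrix_apply_eq_zero_of_not_adj {R : Type*} [AddGroupWithOne R] {a b : V}
    (hne : a ≠ b) (hadj : ¬G.Adj a b) : G.lapMatrix R a b = 0 := by
  simp [lapMatrix, degMatrix, hne, hadj]

theorem lapMatrix_submatrix_apply_eq_zero_of_forall_adj_mem {R : Type*} [AddGroupWithOne R]
    {W C : Finset V} (hWC : W ⊆ Cᶜ) (hW : ∀ a ∈ W, ∀ b, G.Adj a b → b ∈ W ∪ C)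
    (i : {x // x ∈ Cᶜ}) (hi : i ∉ Set.range (Subtype.map id hWC)) (k : {x // x ∈ W}) :
    (G.lapMatrix R).submatrix Subtype.val Subtype.val i (Subtype.map id hWC k) = 0 := by
  have hiW : i.1 ∉ W := fun h => hi ⟨⟨i, h⟩, rfl⟩
  refine G.lapMatrix_apply_eq_zero_of_not_adj (fun h => hiW (h ▸ k.2)) fun hadj => ?_
  simpa [hiW, Finset.mem_compl.mp i.2] using hW k k.2 i hadj.symm

theorem posDef_lapMatrix_submatrix (hG : G.Connected) {κ : Type*} [Fintype κ] {f : κ → V}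
    (hf : Injective f) {w : V} (hw : w ∉ Set.range f) :
    ((G.lapMatrix ℝ).submatrix f f).PosDef := by
  have hpsd := posSemidef_lapMatrix ℝ G
  refine .of_dotProduct_mulVec_pos (hpsd.1.submatrix f) fun x hx => ?_
  set y := extend f x 0 with hy
  have hquad : x ⬝ᵥ ((G.lapMatrix ℝ).submatrix f f *ᵥ x) = y ⬝ᵥ (G.lapMatrix ℝ *ᵥ y) := by
    rw [hf.extend_dotProduct, hf.mulVec_extend]
    rfl
  have hnonneg : 0 ≤ y ⬝ᵥ (G.lapMatrix ℝ *ᵥ y) := by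
    simpa only [star_trivial] using hpsd.dotProduct_mulVec_nonneg y
  rw [star_trivial, hquad]
  refine hnonneg.lt_of_ne' fun h => hx (funext fun k => ?_)
  have hLy : G.lapMatrix ℝ *ᵥ y = 0 := by
    rwa [← hpsd.dotProduct_mulVec_zero_iff, star_trivial]
  rw [lapMatrix_mulVec_eq_zero_iff_forall_reachable] at hLy
  rw [Pi.zero_apply, ← hf.extend_apply x 0 k, ← hy, hLy _ w (hG.preconnected _ _), hy,
    extend_apply' _ _ _ hw, Pi.zero_apply]

theorem lapMatrix_mulVec_matPinv_mulVec_single_sub_single (hG : G.Connected) (s t : V) :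
    G.lapMatrix ℝ *ᵥ (matPinv (G.lapMatrix ℝ) *ᵥ (Pi.single s 1 - Pi.single t 1)) =
      Pi.single s 1 - Pi.single t 1 :=
  mulVec_matPinv_mulVec_of_orthogonal_ker (G.isSymm_lapMatrix ℝ) fun v hv => by
    rw [lapMatrix_mulVec_eq_zero_iff_forall_reachable] at hv
    rw [dotProduct_sub, dotProduct_single, dotProduct_single, hv s t (hG.preconnected s t),
      sub_self]

end SimpleGraph

/-- Cut property of resistance distance: with a vertex cut `Vcut` separating the
component set `V1 ∋ s` from `V2 ∋ t` (inside `U = V \ Vcut`),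
`r(s,t) = e_sᵀ L_{V1V1}⁻¹ e_s + e_tᵀ L_{V2V2}⁻¹ e_t + (p_s - p_t)ᵀ (L/Vcut)† (p_s - p_t)`. -/
theorem resistance_cut_property {n : ℕ} (G : SimpleGraph (Fin n))
    [DecidableRel G.Adj] (hG : G.Connected)
    (Vcut V1 V2 : Finset (Fin n)) (hcut : Vcut.Nonempty)
    (hV1U : V1 ⊆ Vcutᶜ) (hV2U : V2 ⊆ Vcutᶜ) (hdisj : Disjoint V1 V2)
    (hclosed1 : ∀ a ∈ V1, ∀ b, G.Adj a b → b ∈ V1 ∪ Vcut)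
    (hclosed2 : ∀ a ∈ V2, ∀ b, G.Adj a b → b ∈ V2 ∪ Vcut)
    (s t : Fin n) (hs : s ∈ V1) (ht : t ∈ V2) :
    let L := G.lapMatrix ℝ
    let LUU : Matrix {x // x ∈ Vcutᶜ} {x // x ∈ Vcutᶜ} ℝ :=
      L.submatrix Subtype.val Subtype.val
    let LUC : Matrix {x // x ∈ Vcutᶜ} {x // x ∈ Vcut} ℝ :=
      L.submatrix Subtype.val Subtype.val
    let LCU : Matrix {x // x ∈ Vcut} {x // x ∈ Vcutᶜ} ℝ :=
      L.submatrix Subtype.val Subtype.val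
    let LCC : Matrix {x // x ∈ Vcut} {x // x ∈ Vcut} ℝ :=
      L.submatrix Subtype.val Subtype.val
    let S : Matrix {x // x ∈ Vcut} {x // x ∈ Vcut} ℝ := LCC - LCU * LUU⁻¹ * LUC
    let p : {x // x ∈ Vcutᶜ} → {x // x ∈ Vcut} → ℝ :=
      fun u c => -((LUU⁻¹ * LUC) u c)
    let L1 : Matrix {x // x ∈ V1} {x // x ∈ V1} ℝ :=
      L.submatrix Subtype.val Subtype.val
    let L2 : Matrix {x // x ∈ V2} {x // x ∈ V2} ℝ :=
      L.submatrix Subtype.val Subtype.val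
    rdist G s t =
      (Pi.single ⟨s, hs⟩ 1 : {x // x ∈ V1} → ℝ) ⬝ᵥ (L1⁻¹ *ᵥ Pi.single ⟨s, hs⟩ 1) +
      (Pi.single ⟨t, ht⟩ 1 : {x // x ∈ V2} → ℝ) ⬝ᵥ (L2⁻¹ *ᵥ Pi.single ⟨t, ht⟩ 1) +
      (p ⟨s, hV1U hs⟩ - p ⟨t, hV2U ht⟩) ⬝ᵥ
        (matPinv S *ᵥ (p ⟨s, hV1U hs⟩ - p ⟨t, hV2U ht⟩)) := by
  intro L LUU LUC LCU LCC S p L1 L2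
  obtain ⟨c, hc⟩ := hcut
  have hunit : ∀ W : Finset (Fin n), c ∉ W →
      IsUnit (L.submatrix (Subtype.val : {x // x ∈ W} → Fin n) Subtype.val).det := fun W hW =>
    (G.posDef_lapMatrix_submatrix hG Subtype.val_injective (w := c)
      (by simpa using hW)).det_pos.ne'.isUnit
  have hLUU : IsUnit LUU.det := hunit _ (Finset.notMem_compl.mpr hc)
  set xU : {x // x ∈ Vcutᶜ} → ℝ := Pi.single ⟨s, hV1U hs⟩ 1 - Pi.single ⟨t, hV2U ht⟩ 1
  have hx : extend Subtype.val xU 0 = Pi.single s 1 - Pi.single t 1 := by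
    simpa [Subtype.val_injective.extend_single] using
      extend_sub Subtype.val (Pi.single ⟨s, hV1U hs⟩ (1 : ℝ)) (Pi.single ⟨t, hV2U ht⟩ 1) 0 0
  have hp : p ⟨s, hV1U hs⟩ - p ⟨t, hV2U ht⟩ = -(xU ᵥ* (LUU⁻¹ * LUC)) := by
    funext c
    simp only [p, xU, sub_vecMul, single_vecMul, one_smul, Pi.sub_apply, Pi.neg_apply, row_apply]
    ring
  have hranges : Disjoint (Set.range (Subtype.map id hV1U)) (Set.range (Subtype.map id hV2U)) :=
    Set.disjoint_left.mpr fun _ ⟨k, hk⟩ ⟨k', hk'⟩ => Finset.disjoint_left.mp hdisj k.2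
      ((show k'.1 = k.1 from congrArg Subtype.val (hk'.trans hk.symm)) ▸ k'.2)
  have hsplit := single_sub_single_dotProduct_inv_mulVec
    (Subtype.map_injective _ injective_id) (Subtype.map_injective _ injective_id) hLUU
    (hunit V1 fun h => Finset.mem_compl.mp (hV1U h) hc)
    (hunit V2 fun h => Finset.mem_compl.mp (hV2U h) hc)
    (G.lapMatrix_submatrix_apply_eq_zero_of_forall_adj_mem hV1U hclosed1)
    (G.lapMatrix_submatrix_apply_eq_zero_of_forall_adj_mem hV2U hclosed2) hranges ⟨s, hs⟩ ⟨t, ht⟩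
  have hschur := extend_dotProduct_eq_add_schur (G.isSymm_lapMatrix ℝ) hLUU
    ((G.lapMatrix_mulVec_matPinv_mulVec_single_sub_single hG s t).trans hx.symm)
  rw [hx] at hschur
  rw [rdist, hschur, hp, mulVec_neg, neg_dotProduct, dotProduct_neg, neg_neg]
  exact congrArg (· + _) hsplit
end

section
/- The Schur complement of a Laplacian matrix is again a Laplacian matrix: if L is the Laplacian of a connected weighted graph and V = U ∪ V_cut a partition, then S = L_{V_cut V_cut} - L_{V_cut U} L_{UU}^{-1} L_{U V_cut} has zero row sums and nonpositive off-diagonal entries, i.e., S is the Laplacian of a weighted graph on V_cut. -/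
open Matrix

lemma posdef_mulVec_nonneg {m : Type*} [Fintype m] (A : Matrix m m ℝ)
    (hA : A.PosDef) (hoff : ∀ i j, i ≠ j → A i j ≤ 0) (x : m → ℝ)
    (hb : ∀ i, 0 ≤ A.mulVec x i) : ∀ i, 0 ≤ x i := by
  by_contra h
  push_neg at h
  obtain ⟨i0, hi0⟩ := h
  set p : m → ℝ := fun i => max (x i) 0 with hp
  set q : m → ℝ := fun i => max (-x i) 0 with hq
  have hqne : q ≠ 0 := by
    intro h0
    have : q i0 = 0 := by rw [h0]; rfl
    simp only [hq] at this
    have : -x i0 ≤ 0 := by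
      by_contra hc; push_neg at hc
      rw [max_eq_left hc.le] at this; linarith
    linarith
  have hq0 : ∀ i, 0 ≤ q i := fun i => le_max_right _ _
  have hp0 : ∀ i, 0 ≤ p i := fun i => le_max_right _ _
  have hpq : ∀ i, p i * q i = 0 := by
    intro i
    rcases le_total (x i) 0 with h1 | h1
    · have : p i = 0 := max_eq_right h1
      rw [this, zero_mul]
    · have : q i = 0 := max_eq_right (by linarith)
      rw [this, mul_zero]
  have hx : x = p - q := by
    funext i
    simp only [hp, hq, Pi.sub_apply]
    rcases le_total (x i) 0 with h1 | h1
    · rw [max_eq_right h1, max_eq_left (by linarith)]; ring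
    · rw [max_eq_left h1, max_eq_right (by linarith)]; ring
  have hqAp : q ⬝ᵥ A.mulVec p ≤ 0 := by
    rw [dotProduct]
    apply Finset.sum_nonpos
    intro i _
    simp only [mulVec, dotProduct, Finset.mul_sum]
    apply Finset.sum_nonpos
    intro j _
    rcases eq_or_ne i j with rfl | hij
    · have h0 : q i * (A i i * p i) = A i i * (p i * q i) := by ring
      rw [h0, hpq i, mul_zero]
    · have h1 := hoff i j hij
      have := mul_nonneg (hq0 i) (hp0 j)
      nlinarith [hq0 i, hp0 j]
  have hqAx : 0 ≤ q ⬝ᵥ A.mulVec x := by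
    rw [dotProduct]
    exact Finset.sum_nonneg fun i _ => mul_nonneg (hq0 i) (hb i)
  have hsplit : q ⬝ᵥ A.mulVec x = q ⬝ᵥ A.mulVec p - q ⬝ᵥ A.mulVec q := by
    rw [hx, mulVec_sub, dotProduct_sub]
  have hqAq : q ⬝ᵥ A.mulVec q ≤ 0 := by linarith
  have := hA.dotProduct_mulVec_pos hqne
  simp only [star_trivial] at this
  linarith

lemma posdef_inv_entries_nonneg {m : Type*} [Fintype m] [DecidableEq m]
    (A : Matrix m m ℝ) (hA : A.PosDef) (hoff : ∀ i j, i ≠ j → A i j ≤ 0) :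
    ∀ i j, 0 ≤ A⁻¹ i j := by
  intro i j
  have hdet : IsUnit A.det := isUnit_iff_ne_zero.mpr hA.det_pos.ne'
  have hmul : A * A⁻¹ = 1 := A.mul_nonsing_inv hdet
  refine posdef_mulVec_nonneg A hA hoff (fun k => A⁻¹ k j) (fun i' => ?_) i
  have : A.mulVec (fun k => A⁻¹ k j) i' = (A * A⁻¹) i' j := by
    simp [mulVec, dotProduct, Matrix.mul_apply]
  rw [this, hmul, Matrix.one_apply]
  split <;> norm_num

/-- The Schur complement of a weighted-graph Laplacian onto a vertex subset is again
a Laplacian: it has zero row sums and nonpositive off-diagonal entries. -/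
theorem schur_complement_of_laplacian_is_laplacian {n : ℕ}
    (L : Matrix (Fin n) (Fin n) ℝ) (hsym : L.IsSymm)
    (hrow : ∀ i, ∑ j, L i j = 0) (hoff : ∀ i j, i ≠ j → L i j ≤ 0)
    (Vcut : Finset (Fin n)) (hU : (Vcutᶜ : Finset (Fin n)).Nonempty)
    (hpos : ((L.submatrix Subtype.val Subtype.val :
        Matrix {x // x ∈ Vcutᶜ} {x // x ∈ Vcutᶜ} ℝ)).PosDef) :
    let LUU : Matrix {x // x ∈ Vcutᶜ} {x // x ∈ Vcutᶜ} ℝ :=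
      L.submatrix Subtype.val Subtype.val
    let LUC : Matrix {x // x ∈ Vcutᶜ} {x // x ∈ Vcut} ℝ :=
      L.submatrix Subtype.val Subtype.val
    let LCU : Matrix {x // x ∈ Vcut} {x // x ∈ Vcutᶜ} ℝ :=
      L.submatrix Subtype.val Subtype.val
    let LCC : Matrix {x // x ∈ Vcut} {x // x ∈ Vcut} ℝ :=
      L.submatrix Subtype.val Subtype.val
    let S : Matrix {x // x ∈ Vcut} {x // x ∈ Vcut} ℝ := LCC - LCU * LUU⁻¹ * LUC
    (∀ i, ∑ j, S i j = 0) ∧ (∀ i j, i ≠ j → S i j ≤ 0) := by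
  intro LUU LUC LCU LCC S
  have hdet : IsUnit LUU.det := isUnit_iff_ne_zero.mpr hpos.det_pos.ne'
  have hinv : LUU⁻¹ * LUU = 1 := LUU.nonsing_inv_mul hdet
  have hinvnn : ∀ k l, 0 ≤ LUU⁻¹ k l :=
    posdef_inv_entries_nonneg _ hpos
      (fun k l hkl => hoff _ _ (fun h => hkl (Subtype.ext h)))
  have hCU : ∀ (i : {x // x ∈ Vcut}) (l : {x // x ∈ Vcutᶜ}), L i.val l.val ≤ 0 := by
    intro i l
    apply hoff
    intro h
    have hl := l.2
    rw [Finset.mem_compl] at hl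
    exact hl (h ▸ i.2)
  have hUC : ∀ (l : {x // x ∈ Vcutᶜ}) (j : {x // x ∈ Vcut}), L l.val j.val ≤ 0 := by
    intro l j
    apply hoff
    intro h
    have hl := l.2
    rw [Finset.mem_compl] at hl
    exact hl (h ▸ j.2)
  constructor
  · intro i
    have h1 : ∀ l : {x // x ∈ Vcutᶜ},
        (∑ j : {x // x ∈ Vcut}, L l.val j.val) = - ∑ k : {x // x ∈ Vcutᶜ}, L l.val k.val := by
      intro l
      have h2 := hrow l.val
      rw [← Finset.sum_add_sum_compl Vcut (fun j => L l.val j)] at h2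
      rw [Finset.sum_coe_sort Vcut (fun j => L l.val j),
        Finset.sum_coe_sort Vcutᶜ (fun j => L l.val j)]
      linarith
    have key : ∑ j, (LCU * LUU⁻¹ * LUC) i j = - ∑ l, LCU i l := by
      calc ∑ j, (LCU * LUU⁻¹ * LUC) i j
          = ∑ j, ∑ k, (LCU * LUU⁻¹) i k * LUC k j := by
            simp [Matrix.mul_apply]
        _ = ∑ k, (LCU * LUU⁻¹) i k * ∑ j, LUC k j := by
            rw [Finset.sum_comm]
            simp [Finset.mul_sum]
        _ = ∑ k, (LCU * LUU⁻¹) i k * (- ∑ l, LUU k l) := by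
            apply Finset.sum_congr rfl
            intro k _
            congr 1
            exact h1 k
        _ = - ∑ k, ∑ l, (LCU * LUU⁻¹) i k * LUU k l := by
            simp [Finset.mul_sum]
        _ = - ∑ l, ∑ k, (LCU * LUU⁻¹) i k * LUU k l := by
            rw [Finset.sum_comm]
        _ = - ∑ l, (LCU * LUU⁻¹ * LUU) i l := by
            simp [Matrix.mul_apply]
        _ = - ∑ l, LCU i l := by
            rw [Matrix.mul_assoc, hinv, Matrix.mul_one]
    have hsum : ∑ j, S i j = (∑ j, LCC i j) - ∑ j, (LCU * LUU⁻¹ * LUC) i j := by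
      simp [S, Matrix.sub_apply, Finset.sum_sub_distrib]
    rw [hsum, key]
    have h2 := hrow i.val
    rw [← Finset.sum_add_sum_compl Vcut (fun j => L i.val j)] at h2
    rw [← Finset.sum_coe_sort Vcut (fun j => L i.val j),
      ← Finset.sum_coe_sort Vcutᶜ (fun j => L i.val j)] at h2
    have hc : (∑ j, LCC i j) = ∑ j : {x // x ∈ Vcut}, L i.val j.val := rfl
    have hc2 : (∑ l, LCU i l) = ∑ l : {x // x ∈ Vcutᶜ}, L i.val l.val := rfl
    rw [hc, hc2]
    linarith [h2]
  · intro i j hij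
    have hLij := hoff i.val j.val (fun h => hij (Subtype.ext h))
    have hprod : 0 ≤ (LCU * LUU⁻¹ * LUC) i j := by
      rw [Matrix.mul_apply]
      apply Finset.sum_nonneg
      intro k _
      have h2 : (LCU * LUU⁻¹) i k ≤ 0 := by
        rw [Matrix.mul_apply]
        apply Finset.sum_nonpos
        intro l _
        exact mul_nonpos_of_nonpos_of_nonneg (hCU i l) (hinvnn l k)
      have h3 : LUC k j ≤ 0 := hUC k j
      nlinarith [h2, h3]
    have : S i j = L i.val j.val - (LCU * LUU⁻¹ * LUC) i j := rfl
    rw [this]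
    linarith
end

section
/- For a connected graph G with fixed vertex v, all entries of L_v^{-1} are nonnegative, and the diagonal entry (L_v^{-1})_{ss} is the maximal entry in row s: (L_v^{-1})_{st} ≤ min((L_v^{-1})_{ss}, (L_v^{-1})_{tt}) for all s,t. -/
/-!
Maximum principle for a positive definite matrix `A` with nonpositive off-diagonal entries: the
cross term `x⁺ ⬝ A x⁻` is `≤ 0`, so `x⁺ ⬝ A x⁺ ≤ x⁺ ⬝ A x`, and hence `x ≤ 0` as soon as
`x⁺ ⬝ A x ≤ 0`. Applied to `-A⁻¹ eₜ` this gives `A⁻¹ ≥ 0`; applied to `A⁻¹ eₜ - (A⁻¹)ₜₜ 𝟙`, using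
that the row sums of `A` are nonnegative, it gives `(A⁻¹)ₛₜ ≤ (A⁻¹)ₜₜ`. The grounded Laplacian is
such a matrix: its quadratic form is that of `L` on vectors vanishing at `v`, and on a connected
graph the form of `L` vanishes only on constant vectors.
-/

open Matrix

namespace Matrix

variable {m : Type*} [Fintype m] {A : Matrix m m ℝ}

lemma dotProduct_mulVec_nonpos_of_mul_eq_zero (hA : Pairwise fun i j ↦ A i j ≤ 0)
    {y z : m → ℝ} (hy : 0 ≤ y) (hz : 0 ≤ z) (hyz : ∀ i, y i * z i = 0) :
    y ⬝ᵥ (A *ᵥ z) ≤ 0 := by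
  simp only [dotProduct, mulVec, Finset.mul_sum]
  refine Finset.sum_nonpos fun i _ ↦ Finset.sum_nonpos fun j _ ↦ ?_
  rcases eq_or_ne i j with rfl | hij
  · rw [mul_left_comm, hyz, mul_zero]
  · rw [mul_left_comm]
    exact mul_nonpos_of_nonpos_of_nonneg (hA hij) (mul_nonneg (hy i) (hz j))

lemma nonpos_of_posPart_dotProduct_mulVec_nonpos (hPD : A.PosDef)
    (hA : Pairwise fun i j ↦ A i j ≤ 0) {x : m → ℝ} (h : x⁺ ⬝ᵥ (A *ᵥ x) ≤ 0) : x ≤ 0 := by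
  have hdisj : ∀ i, x⁺ i * x⁻ i = 0 := fun i ↦ by
    rcases le_total (x i) 0 with hi | hi
    · simp [posPart_eq_zero.2 hi]
    · simp [negPart_eq_zero.2 hi]
  have hcross : x⁺ ⬝ᵥ (A *ᵥ x⁻) ≤ 0 :=
    dotProduct_mulVec_nonpos_of_mul_eq_zero hA (posPart_nonneg x) (negPart_nonneg x) hdisj
  have hsplit : x⁺ ⬝ᵥ (A *ᵥ x) = x⁺ ⬝ᵥ (A *ᵥ x⁺) - x⁺ ⬝ᵥ (A *ᵥ x⁻) := by
    rw [← dotProduct_sub, ← mulVec_sub, posPart_sub_negPart]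
  rw [← posPart_eq_zero]
  by_contra hpos
  have := hPD.dotProduct_mulVec_pos hpos
  rw [star_trivial] at this
  linarith

variable {n R : Type*} [Fintype n] [CommSemiring R] {e : m → n}

theorem extend_zero_dotProduct (he : e.Injective) (x : m → R) (y : n → R) :
    Function.extend e x 0 ⬝ᵥ y = x ⬝ᵥ (y ∘ e) :=
  (Fintype.sum_of_injective e he _ _
    (fun k hk ↦ by simp [Function.extend_apply' _ _ _ (by simpa using hk)])
    (fun i ↦ by simp [he.extend_apply])).symm

theorem submatrix_mulVec_of_injective (he : e.Injective) (M : Matrix n n R) (x : m → R) :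
    M.submatrix e e *ᵥ x = (M *ᵥ Function.extend e x 0) ∘ e := by
  ext i
  simp only [Function.comp_apply, mulVec]
  rw [dotProduct_comm (M (e i)), extend_zero_dotProduct he, dotProduct_comm]
  rfl

theorem dotProduct_submatrix_mulVec (he : e.Injective) (M : Matrix n n R) (x : m → R) :
    x ⬝ᵥ (M.submatrix e e *ᵥ x) = Function.extend e x 0 ⬝ᵥ (M *ᵥ Function.extend e x 0) := by
  rw [submatrix_mulVec_of_injective he, extend_zero_dotProduct he]

theorem submatrix_mulVec_one_nonneg {M : Matrix n n ℝ} (hM : Pairwise fun i j ↦ M i j ≤ 0)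
    (h1 : 0 ≤ M *ᵥ 1) (he : e.Injective) : 0 ≤ M.submatrix e e *ᵥ 1 := by
  classical
  intro i
  set X : n → ℝ := Function.extend e 1 0
  -- `1 - X` is the indicator of the deleted indices, where row `e i` of `M` is nonpositive.
  have hdefect : Pi.single (e i) 1 ⬝ᵥ (M *ᵥ (1 - X)) ≤ 0 := by
    refine dotProduct_mulVec_nonpos_of_mul_eq_zero hM ?_ ?_ fun k ↦ ?_
    · exact Pi.single_nonneg.2 zero_le_one
    · intro k
      by_cases hk : ∃ j, e j = k
      · obtain ⟨j, rfl⟩ := hk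
        simp [X, he.extend_apply]
      · simp [X, Function.extend_apply' _ _ _ hk]
    · rcases eq_or_ne k (e i) with rfl | hk
      · simp [X, he.extend_apply]
      · simp [hk]
  have hsum : 0 ≤ (M *ᵥ 1) (e i) := h1 (e i)
  rw [mulVec_sub, single_dotProduct, one_mul, Pi.sub_apply] at hdefect
  rw [submatrix_mulVec_of_injective he, Function.comp_apply]
  show 0 ≤ (M *ᵥ X) (e i)
  linarith

variable [DecidableEq m]

lemma mulVec_inv_mulVec_single (hA : IsUnit A.det) (j : m) :
    A *ᵥ (A⁻¹ *ᵥ Pi.single j 1) = Pi.single j 1 := by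
  rw [mulVec_mulVec, mul_nonsing_inv A hA, one_mulVec]

theorem PosDef.inv_apply_nonneg (hPD : A.PosDef) (hA : Pairwise fun i j ↦ A i j ≤ 0) (i j : m) :
    0 ≤ A⁻¹ i j := by
  have hx : -(A⁻¹ *ᵥ Pi.single j 1) ≤ 0 := by
    refine nonpos_of_posPart_dotProduct_mulVec_nonpos hPD hA ?_
    rw [mulVec_neg, mulVec_inv_mulVec_single hPD.det_pos.ne'.isUnit, dotProduct_neg,
      dotProduct_single, mul_one, neg_nonpos]
    exact posPart_nonneg (-(A⁻¹ *ᵥ Pi.single j 1)) j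
  simpa [mulVec_single_one] using hx i

theorem PosDef.inv_apply_le_inv_apply_self (hPD : A.PosDef) (hA : Pairwise fun i j ↦ A i j ≤ 0)
    (hrow : 0 ≤ A *ᵥ 1) (i j : m) : A⁻¹ i j ≤ A⁻¹ j j := by
  set x := A⁻¹ *ᵥ Pi.single j 1 with hx
  set c := A⁻¹ j j
  have hxc : x - c • 1 ≤ 0 := by
    refine nonpos_of_posPart_dotProduct_mulVec_nonpos hPD hA ?_
    rw [mulVec_sub, mulVec_inv_mulVec_single hPD.det_pos.ne'.isUnit, dotProduct_sub,
      dotProduct_single, mulVec_smul, dotProduct_smul]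
    have hj : (x - c • 1)⁺ j = 0 := by simp [hx, c]
    have hrowsum : 0 ≤ (x - c • 1)⁺ ⬝ᵥ (A *ᵥ 1) :=
      dotProduct_nonneg_of_nonneg (posPart_nonneg _) hrow
    rw [hj, zero_mul, zero_sub, neg_nonpos, smul_eq_mul]
    exact mul_nonneg (hPD.inv_apply_nonneg hA j j) hrowsum
  simpa [hx, c, sub_nonpos] using hxc i

end Matrix

namespace SimpleGraph

variable {V : Type*} [Fintype V] [DecidableEq V] (G : SimpleGraph V) [DecidableRel G.Adj]

theorem lapMatrix_apply_nonpos {i j : V} (hij : i ≠ j) : G.lapMatrix ℝ i j ≤ 0 := by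
  rw [lapMatrix, Matrix.sub_apply, degMatrix, diagonal_apply_ne _ hij, adjMatrix_apply]
  split_ifs <;> norm_num

variable {G}

theorem dotProduct_lapMatrix_mulVec_pos (hG : G.Connected) {x : V → ℝ} {v : V} (hv : x v = 0)
    (hx : x ≠ 0) : 0 < x ⬝ᵥ (G.lapMatrix ℝ *ᵥ x) := by
  have hnonneg : 0 ≤ x ⬝ᵥ (G.lapMatrix ℝ *ᵥ x) := by
    simpa using (posSemidef_lapMatrix ℝ G).dotProduct_mulVec_nonneg x
  refine hnonneg.lt_of_ne fun hzero ↦ hx ?_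
  have hconst := (lapMatrix_toLinearMap₂'_apply'_eq_zero_iff_forall_reachable G x).1
    (by rw [toLinearMap₂'_apply']; exact hzero.symm)
  ext i
  rw [hconst i v (hG.preconnected i v), hv, Pi.zero_apply]

theorem posDef_lapMatrix_submatrix_s18 {m : Type*} [Fintype m] (hG : G.Connected) {e : m → V}
    (he : e.Injective) {v : V} (hv : v ∉ Set.range e) :
    ((G.lapMatrix ℝ).submatrix e e).PosDef := by
  refine .of_dotProduct_mulVec_pos ((posSemidef_lapMatrix ℝ G).isHermitian.submatrix e)
    fun x hx ↦ ?_
  rw [star_trivial, dotProduct_submatrix_mulVec he]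
  refine dotProduct_lapMatrix_mulVec_pos hG (v := v) (Function.extend_apply' _ _ _ ?_) ?_
  · simpa using hv
  · refine fun h ↦ hx (funext fun i ↦ ?_)
    rw [← he.extend_apply x 0 i, h, Pi.zero_apply, Pi.zero_apply]

end SimpleGraph

/-- All entries of `L_v⁻¹` are nonnegative, and each entry is dominated by the
corresponding diagonal entries: `(L_v⁻¹)_{st} ≤ min((L_v⁻¹)_{ss}, (L_v⁻¹)_{tt})`. -/
theorem grounded_inverse_nonneg_diag_dominant {n : ℕ} (G : SimpleGraph (Fin n))
    [DecidableRel G.Adj] (hG : G.Connected) (v : Fin n) :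
    let N : Matrix {i : Fin n // i ≠ v} {i : Fin n // i ≠ v} ℝ :=
      ((G.lapMatrix ℝ).submatrix Subtype.val Subtype.val)⁻¹
    ∀ s t, 0 ≤ N s t ∧ N s t ≤ min (N s s) (N t t) := by
  intro N s t
  have hval : (Subtype.val : {i : Fin n // i ≠ v} → Fin n).Injective := Subtype.val_injective
  have hPD := G.posDef_lapMatrix_submatrix_s18 hG hval (v := v) (by simp)
  have hoff : Pairwise fun i j : {i : Fin n // i ≠ v} ↦ G.lapMatrix ℝ i j ≤ 0 :=
    fun i j hij ↦ G.lapMatrix_apply_nonpos (hval.ne hij)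
  have hrow := submatrix_mulVec_one_nonneg (fun i j hij ↦ G.lapMatrix_apply_nonpos hij)
    G.lapMatrix_mulVec_const_eq_zero.ge hval
  have hsymm : N t s = N s t := by simpa using hPD.isHermitian.inv.apply s t
  refine ⟨hPD.inv_apply_nonneg hoff s t, le_min ?_ (hPD.inv_apply_le_inv_apply_self hoff hrow s t)⟩
  rw [← hsymm]
  exact hPD.inv_apply_le_inv_apply_self hoff hrow t s
end
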